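/- Let n = p+q with p ≥ q ≥ 1, let X be an n×n Hermitian matrix with eigenvalues λ_1 ≥ ... ≥ λ_n and let s_1 ≥ ... ≥ s_q ≥ 0 be the singular values of its upper-right p×q block. Then Σ_{k=1}^{q} 2 s_k ≤ Σ_{i=1}^{q} λ_i − Σ_{j=n−q+1}^{n} λ_j. -/

import Mathlib

open Matrix
open scoped ComplexOrder

noncomputable section

/-- `lam` is the weakly decreasing list of eigenvalues of the Hermitian matrix `X`. -/
def IsEigList {n : ℕ} {X : Matrix (Fin n) (Fin n) ℂ} (hX : X.IsHermitian)
    (lam : Fin n → ℝ) : Prop :=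
  Antitone lam ∧ ∃ e : Fin n ≃ Fin n, ∀ i, lam i = hX.eigenvalues (e i)

/-- `s` is the weakly decreasing list of singular values of `Y`. -/
def IsSingList {p q : ℕ} (Y : Matrix (Fin p) (Fin q) ℂ) (s : Fin q → ℝ) : Prop :=
  Antitone s ∧ (∀ k, 0 ≤ s k) ∧
    ∃ e : Fin q ≃ Fin q, ∀ k,
      s k ^ 2 = (Matrix.posSemidef_conjTranspose_mul_self Y).1.eigenvalues (e k)

/-- The upper-right `p × q` block of an `(p+q) × (p+q)` matrix. -/
def offBlock {p q : ℕ} (X : Matrix (Fin (p + q)) (Fin (p + q)) ℂ) :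
    Matrix (Fin p) (Fin q) ℂ :=
  fun i j => X (Fin.castAdd q i) (Fin.natAdd p j)

/-- The matrix `[[0, Y],[Yᴴ, 0]]`. -/
def blockZ {p q : ℕ} (Y : Matrix (Fin p) (Fin q) ℂ) :
    Matrix (Fin (p + q)) (Fin (p + q)) ℂ :=
  Matrix.reindex finSumFinEquiv finSumFinEquiv (Matrix.fromBlocks 0 Y Yᴴ 0)

/-- `ν(s) = (s₁,…,s_q,0,…,0,−s_q,…,−s₁) ∈ ℝⁿ`, `n = p + q`. -/
def nuList (p q : ℕ) (s : Fin q → ℝ) : Fin (p + q) → ℝ :=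
  fun k =>
    if h : (k : ℕ) < q then s ⟨k, h⟩
    else if h' : p ≤ (k : ℕ) then
      -s ⟨p + q - 1 - (k : ℕ), by have := k.isLt; omega⟩
    else 0

/-- The matrix `I_{p,q} = Diag(I_p, −I_q)`. -/
def Ipq (p q : ℕ) : Matrix (Fin (p + q)) (Fin (p + q)) ℂ :=
  Matrix.diagonal fun k => if (k : ℕ) < p then 1 else -1

/-- The `U(n)`-conjugation orbit of a matrix. -/
def uOrbit {n : ℕ} (X : Matrix (Fin n) (Fin n) ℂ) : Set (Matrix (Fin n) (Fin n) ℂ) :=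
  { Y | ∃ g ∈ Matrix.unitaryGroup (Fin n) ℂ, Y = g * X * star g }

/-- Membership in the Horn cone `Horn(n)`. -/
def HornMem {n : ℕ} (x y z : Fin n → ℝ) : Prop :=
  ∃ (A B : Matrix (Fin n) (Fin n) ℂ) (hA : A.IsHermitian) (hB : B.IsHermitian)
    (hC : (A + B).IsHermitian), IsEigList hA x ∧ IsEigList hB y ∧ IsEigList hC z
/-
With `J = Ipq p q` and `Y = offBlock X`, one has `X - J X J = 2 [[0, Y], [Yᴴ, 0]]`. If `v k` are
orthonormal eigenvectors of `Yᴴ Y` for the eigenvalues `s k ^ 2` and `u k = (s k)⁻¹ Y v k`, the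
normalised vectors `w k ∝ (u k, v k)` are orthonormal eigenvectors of `[[0, Y], [Yᴴ, 0]]` for the
eigenvalues `s k`, so `∑ 2 s k = ∑ ⟪w k, X w k⟫ - ∑ ⟪J w k, X J w k⟫`. Ky Fan's maximum principle
bounds the first sum by the `q` largest eigenvalues of `X` and the second sum from below by the `q`
smallest ones. The principle itself is a bathtub argument: in an eigenbasis `b` the sum is
`∑ i, λ i c i` with weights `c i = ∑ k, ‖⟪b i, w k⟫‖ ^ 2` in `[0, 1]` that add up to `q`.
-/

open Finset RCLike
open scoped InnerProductSpace

theorem Antitone.sum_mul_le_sum_castLE {n q : ℕ} (hqn : q ≤ n) {μ : Fin n → ℝ}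
    (hμ : Antitone μ) {c : Fin n → ℝ} (hc₀ : ∀ i, 0 ≤ c i) (hc₁ : ∀ i, c i ≤ 1)
    (hc : ∑ i, c i = q) :
    ∑ i, μ i * c i ≤ ∑ k : Fin q, μ (Fin.castLE hqn k) := by
  obtain ⟨r, rfl⟩ := Nat.exists_eq_add_of_le hqn
  rcases q.eq_zero_or_pos with rfl | hq
  · have hc0 : ∀ i, c i = 0 := by
      simpa [sum_eq_zero_iff_of_nonneg fun i _ => hc₀ i] using hc
    simp [hc0]
  set t := μ (Fin.castAdd r ⟨q - 1, by omega⟩)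
  have htop (k : Fin q) : t ≤ μ (Fin.castAdd r k) := hμ (by simp [Fin.le_def]; omega)
  have hbot (j : Fin r) : μ (Fin.natAdd q j) ≤ t := hμ (by simp [Fin.le_def]; omega)
  rw [Fin.sum_univ_add] at hc ⊢
  calc _ ≤ ∑ k, (μ (Fin.castAdd r k) - t * (1 - c (Fin.castAdd r k))) +
          ∑ j, t * c (Fin.natAdd q j) := by
        refine add_le_add (sum_le_sum fun k _ => ?_) (sum_le_sum fun j _ => ?_)
        · nlinarith [htop k, hc₁ (Fin.castAdd r k)]
        · nlinarith [hbot j, hc₀ (Fin.natAdd q j)]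
    _ = ∑ k, μ (Fin.castAdd r k) := by
        simp only [sum_sub_distrib, ← mul_sum, sum_const, card_univ, Fintype.card_fin, nsmul_eq_mul,
          mul_one]
        linear_combination t * hc

section InnerProductSpace

variable {𝕜 E : Type*} [RCLike 𝕜] [NormedAddCommGroup E] [InnerProductSpace 𝕜 E]

theorem OrthonormalBasis.re_inner_map_self_eq_sum {ι : Type*} [Fintype ι]
    (b : OrthonormalBasis ι 𝕜 E) {T : E →ₗ[𝕜] E} {μ : ι → ℝ}
    (hT : ∀ i, T (b i) = (μ i : 𝕜) • b i) (x : E) :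
    re ⟪x, T x⟫_𝕜 = ∑ i, μ i * ‖⟪b i, x⟫_𝕜‖ ^ 2 := by
  have hTx : T x = ∑ i, ⟪b i, x⟫_𝕜 • (μ i : 𝕜) • b i := by
    conv_lhs => rw [← b.sum_repr' x]
    simp only [map_sum, map_smul, hT]
  rw [hTx, inner_sum, map_sum]
  refine sum_congr rfl fun i _ => ?_
  rw [inner_smul_right, inner_smul_right, ← inner_conj_symm x (b i), mul_left_comm,
    RCLike.mul_conj]
  norm_cast

theorem sum_re_inner_map_self_le_sum_castLE {n q : ℕ} (hqn : q ≤ n)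
    (b : OrthonormalBasis (Fin n) 𝕜 E) {T : E →ₗ[𝕜] E} {μ : Fin n → ℝ} (hμ : Antitone μ)
    (hT : ∀ i, T (b i) = (μ i : 𝕜) • b i) {w : Fin q → E} (hw : Orthonormal 𝕜 w) :
    ∑ k, re ⟪w k, T (w k)⟫_𝕜 ≤ ∑ k : Fin q, μ (Fin.castLE hqn k) := by
  simp_rw [b.re_inner_map_self_eq_sum hT]
  rw [sum_comm]
  simp_rw [← mul_sum]
  refine hμ.sum_mul_le_sum_castLE hqn (fun i => by positivity) (fun i => ?_) ?_
  · simpa [norm_inner_symm (b i)] using hw.sum_inner_products_le (b i) (s := univ)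
  · rw [sum_comm]
    simp [b.sum_sq_norm_inner_right, hw.1]

theorem sum_natAdd_le_sum_re_inner_map_self {m q : ℕ}
    (b : OrthonormalBasis (Fin (m + q)) 𝕜 E) {T : E →ₗ[𝕜] E} {μ : Fin (m + q) → ℝ}
    (hμ : Antitone μ) (hT : ∀ i, T (b i) = (μ i : 𝕜) • b i) {w : Fin q → E}
    (hw : Orthonormal 𝕜 w) :
    ∑ k : Fin q, μ (Fin.natAdd m k) ≤ ∑ k, re ⟪w k, T (w k)⟫_𝕜 := by
  have := sum_re_inner_map_self_le_sum_castLE (Nat.le_add_left q m) (b.reindex Fin.revPerm)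
    (T := -T) (μ := fun i => -μ i.rev) (fun i j hij => neg_le_neg (hμ (Fin.rev_le_rev.2 hij)))
    (fun i => by simp [hT]) hw
  have hrev (k : Fin q) : (Fin.castLE (Nat.le_add_left q m) k).rev = Fin.natAdd m k.rev :=
    Fin.ext (by simp; omega)
  simp only [LinearMap.neg_apply, inner_neg_right, map_neg, sum_neg_distrib, hrev,
    neg_le_neg_iff] at this
  rwa [Fintype.sum_equiv Fin.revPerm _ (fun k => μ (Fin.natAdd m k)) (by simp)] at this

theorem orthonormal_inv_norm_smul {ι : Type*} {v : ι → E} (hv₀ : ∀ i, v i ≠ 0)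
    (hv : Pairwise fun i j => ⟪v i, v j⟫_𝕜 = 0) :
    Orthonormal 𝕜 fun i => (‖v i‖⁻¹ : 𝕜) • v i :=
  ⟨fun i => norm_smul_inv_norm (hv₀ i), fun i j hij => by
    simp [inner_smul_left, inner_smul_right, hv hij]⟩

variable {F : Type*} [NormedAddCommGroup F] [InnerProductSpace 𝕜 F] [FiniteDimensional 𝕜 E]
  [FiniteDimensional 𝕜 F]

theorem LinearMap.exists_left_singular_vectors {ι : Type*} {A : F →ₗ[𝕜] E} {v : ι → F}
    (hv : Pairwise fun j k => ⟪v j, v k⟫_𝕜 = 0) {σ : ι → ℝ}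
    (hσ : ∀ k, A.adjoint (A (v k)) = (σ k : 𝕜) ^ 2 • v k) :
    ∃ u : ι → E, (∀ k, A (v k) = (σ k : 𝕜) • u k) ∧ (∀ k, A.adjoint (u k) = (σ k : 𝕜) • v k) ∧
      Pairwise fun j k => ⟪u j, u k⟫_𝕜 = 0 := by
  have hAA (j k) : ⟪A (v j), A (v k)⟫_𝕜 = (σ k : 𝕜) ^ 2 * ⟪v j, v k⟫_𝕜 := by
    rw [← LinearMap.adjoint_inner_right, hσ, inner_smul_right]
  -- where `σ k = 0` the junk value `0⁻¹ = 0` gives `u k = 0`, and indeed `A (v k) = 0`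
  refine ⟨fun k => (σ k : 𝕜)⁻¹ • A (v k), fun k => ?_, fun k => ?_, fun j k hjk => ?_⟩
  · rcases eq_or_ne (σ k) 0 with h | h
    · have : A (v k) = 0 := inner_self_eq_zero.1 (by rw [hAA, h]; simp)
      simp [this]
    · rw [smul_smul, mul_inv_cancel₀ (by exact_mod_cast h), one_smul]
  · rw [map_smul, hσ, smul_smul, sq, ← mul_assoc, inv_mul_mul_self]
  · simp [inner_smul_left, inner_smul_right, hAA, hv hjk]

end InnerProductSpace

theorem Matrix.inner_toEuclideanLin_conj {𝕜 n : Type*} [RCLike 𝕜] [Fintype n] [DecidableEq n]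
    (U A : Matrix n n 𝕜) (x y : EuclideanSpace 𝕜 n) :
    ⟪toEuclideanLin U x, toEuclideanLin A (toEuclideanLin U y)⟫_𝕜 =
      ⟪x, toEuclideanLin (Uᴴ * A * U) y⟫_𝕜 := by
  rw [← LinearMap.adjoint_inner_right, ← toEuclideanLin_conjTranspose_eq_adjoint]
  simp [toLpLin_mul_same]

theorem Orthonormal.toEuclideanLin_comp {𝕜 n ι : Type*} [RCLike 𝕜] [Fintype n] [DecidableEq n]
    {U : Matrix n n 𝕜} (hU : Uᴴ * U = 1) {w : ι → EuclideanSpace 𝕜 n} (hw : Orthonormal 𝕜 w) :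
    Orthonormal 𝕜 (toEuclideanLin U ∘ w) :=
  hw.comp_linearIsometry <| (toEuclideanLin U).isometryOfInner fun x y => by
    simpa [hU, toLpLin_one] using Matrix.inner_toEuclideanLin_conj U 1 x y

theorem EuclideanSpace.inner_toLp_append {𝕜 : Type*} [RCLike 𝕜] {p q : ℕ} (a a' : Fin p → 𝕜)
    (b b' : Fin q → 𝕜) :
    ⟪WithLp.toLp 2 (Fin.append a b), WithLp.toLp 2 (Fin.append a' b')⟫_𝕜 =
      ⟪WithLp.toLp 2 a, WithLp.toLp 2 a'⟫_𝕜 + ⟪WithLp.toLp 2 b, WithLp.toLp 2 b'⟫_𝕜 := by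
  simp [EuclideanSpace.inner_toLp_toLp, dotProduct, Fin.sum_univ_add]

theorem Ipq_mul_Ipq (p q : ℕ) : Ipq p q * Ipq p q = 1 := by
  simp only [Ipq, diagonal_mul_diagonal, ← diagonal_one]
  congr 1 with i
  split_ifs <;> norm_num

theorem Ipq_conjTranspose (p q : ℕ) : (Ipq p q)ᴴ = Ipq p q := by
  simp only [Ipq, diagonal_conjTranspose]
  congr 1 with i
  split_ifs <;> simp [*]

theorem Matrix.IsHermitian.sub_Ipq_mul_mul_Ipq {p q : ℕ}
    {X : Matrix (Fin (p + q)) (Fin (p + q)) ℂ} (hX : X.IsHermitian) :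
    X - Ipq p q * X * Ipq p q = (2 : ℂ) • blockZ (offBlock X) := by
  ext i j
  refine Fin.addCases (fun i => ?_) (fun i => ?_) i <;>
    refine Fin.addCases (fun j => ?_) (fun j => ?_) j <;>
    simp [Ipq, blockZ, offBlock, ← hX.apply (Fin.castAdd q _) (Fin.natAdd p _), two_mul]

theorem blockZ_mulVec_append {p q : ℕ} (Y : Matrix (Fin p) (Fin q) ℂ) (a : Fin p → ℂ)
    (b : Fin q → ℂ) : blockZ Y *ᵥ Fin.append a b = Fin.append (Y *ᵥ b) (Yᴴ *ᵥ a) := by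
  ext i
  refine Fin.addCases (fun i => ?_) (fun i => ?_) i <;>
    simp [blockZ, mulVec, dotProduct, Fin.sum_univ_add]

theorem IsEigList.exists_orthonormalBasis {n : ℕ} {X : Matrix (Fin n) (Fin n) ℂ}
    {hX : X.IsHermitian} {lam : Fin n → ℝ} (hlam : IsEigList hX lam) :
    ∃ b : OrthonormalBasis (Fin n) ℂ (EuclideanSpace ℂ (Fin n)),
      ∀ i, toEuclideanLin X (b i) = (lam i : ℂ) • b i := by
  obtain ⟨-, e, he⟩ := hlam
  refine ⟨hX.eigenvectorBasis.reindex e.symm, fun i => ?_⟩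
  ext1 j
  simp only [OrthonormalBasis.reindex_apply, Equiv.symm_symm, ofLp_toLpLin, toLin'_apply,
    hX.mulVec_eigenvectorBasis, he]
  simp [Complex.real_smul]

theorem IsSingList.exists_right_singular_vectors {p q : ℕ} {Y : Matrix (Fin p) (Fin q) ℂ}
    {s : Fin q → ℝ} (hs : IsSingList Y s) :
    ∃ v : Fin q → EuclideanSpace ℂ (Fin q), Orthonormal ℂ v ∧
      ∀ k, (toEuclideanLin Y).adjoint (toEuclideanLin Y (v k)) = (s k : ℂ) ^ 2 • v k := by
  obtain ⟨-, -, f, hf⟩ := hs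
  have hYY := (posSemidef_conjTranspose_mul_self Y).1
  refine ⟨fun k => hYY.eigenvectorBasis (f k),
    hYY.eigenvectorBasis.orthonormal.comp f f.injective, fun k => ?_⟩
  ext1
  simp [← toEuclideanLin_conjTranspose_eq_adjoint, hYY.mulVec_eigenvectorBasis, ← hf,
    RCLike.real_smul_eq_coe_smul (K := ℂ)]

theorem IsSingList.exists_orthonormal_eigenvectors_blockZ {p q : ℕ}
    {Y : Matrix (Fin p) (Fin q) ℂ} {s : Fin q → ℝ} (hs : IsSingList Y s) :
    ∃ w : Fin q → EuclideanSpace ℂ (Fin (p + q)), Orthonormal ℂ w ∧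
      ∀ k, toEuclideanLin (blockZ Y) (w k) = (s k : ℂ) • w k := by
  obtain ⟨v, hv, hvY⟩ := hs.exists_right_singular_vectors
  obtain ⟨u, hYv, hYu, hu⟩ := LinearMap.exists_left_singular_vectors hv.2 hvY
  set y := fun k => WithLp.toLp 2 (Fin.append (u k).ofLp (v k).ofLp)
  have hy (k) : toEuclideanLin (blockZ Y) (y k) = (s k : ℂ) • y k := by
    have hYv' : Y *ᵥ (v k).ofLp = (s k : ℂ) • (u k).ofLp := by
      simpa using congr(WithLp.ofLp $(hYv k))
    have hYu' : Yᴴ *ᵥ (u k).ofLp = (s k : ℂ) • (v k).ofLp := by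
      simpa [← toEuclideanLin_conjTranspose_eq_adjoint] using congr(WithLp.ofLp $(hYu k))
    ext i
    refine Fin.addCases (fun i => ?_) (fun i => ?_) i <;>
      simp [y, blockZ_mulVec_append, hYv', hYu']
  refine ⟨fun k => (‖y k‖⁻¹ : ℂ) • y k, orthonormal_inv_norm_smul (fun k hk => ?_) ?_,
    fun k => by rw [map_smul, hy, smul_comm]⟩
  · apply hv.ne_zero k
    ext i
    simpa [y] using congr($hk (Fin.natAdd p i))
  · intro j k hjk
    simp [y, EuclideanSpace.inner_toLp_append, hu hjk, hv.2 hjk]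

/-- `Σ_{k=1}^{q} 2 s_k ≤ Σ_{i=1}^{q} λ_i − Σ_{j=n−q+1}^{n} λ_j`. -/
theorem ky_fan_inequality (p q : ℕ)
    (X : Matrix (Fin (p + q)) (Fin (p + q)) ℂ) (hX : X.IsHermitian)
    (lam : Fin (p + q) → ℝ) (hlam : IsEigList hX lam)
    (s : Fin q → ℝ) (hs : IsSingList (offBlock X) s) :
    ∑ k : Fin q, 2 * s k ≤
      ∑ k : Fin q, lam ⟨(k : ℕ), by have := k.isLt; omega⟩ -
        ∑ k : Fin q, lam ⟨p + (k : ℕ), by have := k.isLt; omega⟩ := by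
  obtain ⟨b, hb⟩ := hlam.exists_orthonormalBasis
  obtain ⟨w, hw, hZw⟩ := hs.exists_orthonormal_eigenvectors_blockZ
  set J := toEuclideanLin (Ipq p q)
  have hJw : Orthonormal ℂ (J ∘ w) :=
    hw.toEuclideanLin_comp (by rw [Ipq_conjTranspose, Ipq_mul_Ipq])
  have h2s (k) : 2 * s k = re ⟪w k, toEuclideanLin X (w k)⟫_ℂ -
      re ⟪J (w k), toEuclideanLin X (J (w k))⟫_ℂ := by
    rw [Matrix.inner_toEuclideanLin_conj, Ipq_conjTranspose, ← map_sub, ← inner_sub_right,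
      ← LinearMap.sub_apply, ← map_sub, hX.sub_Ipq_mul_mul_Ipq]
    simp [hZw, inner_smul_right, inner_self_eq_norm_sq_to_K, hw.1 k]
  calc ∑ k, 2 * s k
      = ∑ k, re ⟪w k, toEuclideanLin X (w k)⟫_ℂ -
          ∑ k, re ⟪J (w k), toEuclideanLin X (J (w k))⟫_ℂ := by
        simp_rw [h2s, sum_sub_distrib]
    _ ≤ _ := sub_le_sub (sum_re_inner_map_self_le_sum_castLE (by omega) b hlam.1 hb hw)
        (sum_natAdd_le_sum_re_inner_map_self b hlam.1 hb hJw)
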